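/- For every t > 0, the events {ζ_t = 1} and {τ ≤ t} agree up to a P-null set: P({ζ_t = 1} Δ {τ ≤ t}) = 0. Consequently, {τ ≤ t} ∈ 𝓕^{ζ,c}_t for all t ≥ 0, i.e. τ is a stopping time with respect to the completed natural filtration 𝓕^{ζ,c} (hence also with respect to 𝓕^{ζ,c}_{+}). -/

import Mathlib

open MeasureTheory ProbabilityTheory Real Set Filter

noncomputable section

/-- A standard gamma process on a probability space: starts at `0` a.s., has independent
increments, the increment over `[s, t]` is gamma-distributed with shape `t - s` and rate `1`,
and almost every sample path is right-continuous with left limits. -/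
structure IsStdGammaProcess {Ω : Type*} [MeasurableSpace Ω] (P : Measure Ω)
    (γ : ℝ → Ω → ℝ) : Prop where
  measurable : ∀ t : ℝ, Measurable (γ t)
  zero : ∀ᵐ ω ∂P, γ 0 ω = 0
  indep_incr : ∀ (n : ℕ) (t : Fin (n + 1) → ℝ), Monotone t → (∀ i, 0 ≤ t i) →
    iIndepFun
      (fun i : Fin n => fun ω => γ (t i.succ) ω - γ (t i.castSucc) ω) P
  incr_law : ∀ s t : ℝ, 0 ≤ s → s < t →
    P.map (fun ω => γ t ω - γ s ω) = gammaMeasure (t - s) 1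
  cadlag : ∀ᵐ ω ∂P,
    (∀ t : ℝ, 0 ≤ t → ContinuousWithinAt (fun s => γ s ω) (Set.Ici t) t) ∧
    (∀ t : ℝ, 0 < t → ∃ l : ℝ, Tendsto (fun s => γ s ω) (nhdsWithin t (Set.Iio t)) (nhds l))


/-!
Increments of a gamma process are a.s. strictly positive, so a.s. the path is strictly increasing
along the rationals and hence, being right-continuous, nondecreasing and positive on `(0, ∞)`.
On that event `γ_{t ∧ τ} / γ_τ = 1` forces `γ` to be constant on `[t, τ]` when `τ > t`, which
for a fixed `t` is again a null event. Completing the natural filtration of `ζ` absorbs the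
resulting null symmetric difference.
-/

lemma gammaMeasure_ae_pos (a r : ℝ) : ∀ᵐ x ∂gammaMeasure a r, 0 < x := by
  have hpdf : Measurable (gammaPDF a r) := (measurable_gammaPDFReal a r).ennreal_ofReal
  rw [gammaMeasure, ae_withDensity_iff hpdf]
  filter_upwards [Measure.ae_ne volume 0] with x hx0 hdens
  exact lt_of_le_of_ne (not_lt.mp fun hx => hdens (gammaPDF_of_neg hx)) hx0.symm

lemma mem_closure_Ioo_inter_range_ratCast {a b : ℝ} (hab : a < b) :
    a ∈ closure (Ioo a b ∩ range ((↑) : ℚ → ℝ)) := by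
  have hsub : closure (Ioo a b) ⊆ closure (Ioo a b ∩ range ((↑) : ℚ → ℝ)) :=
    closure_minimal (Rat.denseRange_cast.open_subset_closure_inter isOpen_Ioo) isClosed_closure
  exact hsub (by rw [closure_Ioo hab.ne]; exact left_mem_Icc.mpr hab.le)

lemma monotoneOn_Ici_of_ratCast {f : ℝ → ℝ} {a : ℝ}
    (hf : ∀ t ∈ Ici a, ContinuousWithinAt f (Ici t) t)
    (hrat : ∀ p q : ℚ, a ≤ p → (p : ℝ) < q → f p ≤ f q) : MonotoneOn f (Ici a) := by
  have h_le_rat : ∀ s ∈ Ici a, ∀ q : ℚ, s < q → f s ≤ f q := by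
    intro s hs q hsq
    refine (hf s hs |>.mono fun y hy => hy.1.1.le).closure_le
      (mem_closure_Ioo_inter_range_ratCast hsq) continuousWithinAt_const ?_
    rintro _ ⟨hy, p, rfl⟩
    exact hrat p q (hs.trans hy.1.le) hy.2
  intro s hs t ht hst
  obtain ⟨q, hq⟩ := exists_rat_gt t
  refine continuousWithinAt_const.closure_le (mem_closure_Ioo_inter_range_ratCast hq)
    (hf t ht |>.mono fun y hy => hy.1.1.le) ?_
  rintro _ ⟨hy, p, rfl⟩
  exact h_le_rat s hs p (hst.trans_lt hy.1)

lemma apply_min_div_apply_eq_one_iff {f : ℝ → ℝ} {t r : ℝ} (hmono : MonotoneOn f (Ici 0))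
    (hpos : ∀ u, 0 < u → 0 < f u) (hjump : ∀ q : ℚ, t < q → f t < f q) (ht : 0 < t)
    (hr : 0 < r) : f (min t r) / f r = 1 ↔ r ≤ t := by
  constructor
  · intro h
    by_contra! htr
    rw [min_eq_left htr.le, div_eq_one_iff_eq (hpos r hr).ne'] at h
    obtain ⟨q, htq, hqr⟩ := exists_rat_btwn htr
    have hqle : f q ≤ f r := hmono (ht.le.trans htq.le) hr.le hqr.le
    linarith [hjump q htq]
  · intro hrt
    rw [min_eq_right hrt, div_self (hpos r hr).ne']

namespace IsStdGammaProcess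

variable {Ω : Type*} [MeasurableSpace Ω] {P : Measure Ω} {γ : ℝ → Ω → ℝ}

lemma ae_lt (hγ : IsStdGammaProcess P γ) {s t : ℝ} (hs : 0 ≤ s) (hst : s < t) :
    ∀ᵐ ω ∂P, γ s ω < γ t ω := by
  have hmeas : Measurable fun ω => γ t ω - γ s ω := (hγ.measurable t).sub (hγ.measurable s)
  have h := gammaMeasure_ae_pos (t - s) 1
  rw [← hγ.incr_law s t hs hst, ae_map_iff hmeas.aemeasurable measurableSet_Ioi] at h
  filter_upwards [h] with ω hω using sub_pos.mp hω

lemma ae_forall_lt_ratCast (hγ : IsStdGammaProcess P γ) {s : ℝ} (hs : 0 ≤ s) :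
    ∀ᵐ ω ∂P, ∀ q : ℚ, s < q → γ s ω < γ q ω := by
  rw [ae_all_iff]
  intro q
  by_cases hsq : s < q
  · filter_upwards [hγ.ae_lt hs hsq] with ω hω _ using hω
  · exact Eventually.of_forall fun _ h => absurd h hsq

lemma ae_monotoneOn (hγ : IsStdGammaProcess P γ) :
    ∀ᵐ ω ∂P, MonotoneOn (fun s => γ s ω) (Ici 0) := by
  have hrat : ∀ᵐ ω ∂P, ∀ p q : ℚ, (0 : ℝ) ≤ p → (p : ℝ) < q → γ p ω ≤ γ q ω := by
    rw [ae_all_iff]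
    intro p
    by_cases hp : (0 : ℝ) ≤ p
    · filter_upwards [hγ.ae_forall_lt_ratCast hp] with ω hω q _ hpq using (hω q hpq).le
    · exact Eventually.of_forall fun _ _ h => absurd h hp
  filter_upwards [hrat, hγ.cadlag] with ω hω hcadlag
  exact monotoneOn_Ici_of_ratCast hcadlag.1 hω

lemma ae_pos (hγ : IsStdGammaProcess P γ) : ∀ᵐ ω ∂P, ∀ u, 0 < u → 0 < γ u ω := by
  filter_upwards [hγ.ae_monotoneOn, hγ.zero, hγ.ae_forall_lt_ratCast le_rfl]
    with ω hmono hzero hrat u hu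
  obtain ⟨q, hq0, hqu⟩ := exists_rat_btwn hu
  calc 0 = γ 0 ω := hzero.symm
    _ < γ q ω := hrat q hq0
    _ ≤ γ u ω := hmono hq0.le (hq0.trans hqu).le hqu.le

lemma ae_apply_min_div_apply_eq_one_iff (hγ : IsStdGammaProcess P γ) {τ : Ω → ℝ}
    (hτpos : ∀ ω, 0 < τ ω) {t : ℝ} (ht : 0 < t) :
    ∀ᵐ ω ∂P, γ (min t (τ ω)) ω / γ (τ ω) ω = 1 ↔ τ ω ≤ t := by
  filter_upwards [hγ.ae_monotoneOn, hγ.ae_pos, hγ.ae_forall_lt_ratCast ht.le]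
    with ω hmono hpos hjump
  exact apply_min_div_apply_eq_one_iff hmono hpos hjump ht (hτpos ω)

end IsStdGammaProcess

lemma MeasurableSet.sup_generateFrom_null_of_measure_symmDiff {Ω : Type*}
    {m m0 : MeasurableSpace Ω} {μ : Measure[m0] Ω} {s t : Set Ω}
    (hs : MeasurableSet[m] s) (hst : μ (symmDiff s t) = 0) :
    MeasurableSet[m ⊔ MeasurableSpace.generateFrom {N | μ N = 0}] t := by
  rw [← symmDiff_symmDiff_cancel_left s t]
  exact (le_sup_left (b := MeasurableSpace.generateFrom _) _ hs).symmDiff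
    (le_sup_right (a := m) _ (MeasurableSpace.measurableSet_generateFrom hst))

theorem randomLength_stopping_time_general
    {Ω : Type*} [MeasurableSpace Ω] (P : Measure Ω)
    (γ : ℝ → Ω → ℝ) (hγ : IsStdGammaProcess P γ)
    (τ : Ω → ℝ) (hτpos : ∀ ω, 0 < τ ω)
    (ζ : ℝ → Ω → ℝ) (hζ : ∀ t ω, ζ t ω = γ (min t (τ ω)) ω / γ (τ ω) ω)
    (Fc : ℝ → MeasurableSpace Ω)
    (hFc : ∀ t : ℝ, Fc t =
      (⨆ s ∈ Set.Icc (0 : ℝ) t, MeasurableSpace.comap (ζ s) inferInstance) ⊔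
        MeasurableSpace.generateFrom {A : Set Ω | P A = 0}) :
    (∀ t : ℝ, 0 < t → P (symmDiff {ω | ζ t ω = 1} {ω | τ ω ≤ t}) = 0) ∧
    (∀ t : ℝ, 0 ≤ t → MeasurableSet[Fc t] {ω | τ ω ≤ t}) := by
  have hnull : ∀ t : ℝ, 0 < t → P (symmDiff {ω | ζ t ω = 1} {ω | τ ω ≤ t}) = 0 := by
    intro t ht
    refine measure_symmDiff_eq_zero_iff.mpr (eventuallyEq_set.mpr ?_)
    filter_upwards [hγ.ae_apply_min_div_apply_eq_one_iff hτpos ht] with ω hω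
    simpa only [mem_ofPred_eq, hζ] using hω
  refine ⟨hnull, fun t ht => ?_⟩
  rcases ht.eq_or_lt with rfl | ht
  · simp only [(hτpos _).not_ge, ofPred_false, MeasurableSet.empty]
  · have hζt : MeasurableSet[⨆ s ∈ Icc (0 : ℝ) t, MeasurableSpace.comap (ζ s) inferInstance]
        {ω | ζ t ω = 1} :=
      le_iSup₂ (f := fun s (_ : s ∈ Icc (0 : ℝ) t) => MeasurableSpace.comap (ζ s) inferInstance)
        t ⟨ht.le, le_rfl⟩ _ ((measurableSet_singleton 1).preimage (comap_measurable (ζ t)))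
    rw [hFc t]
    exact hζt.sup_generateFrom_null_of_measure_symmDiff (hnull t ht)

/-- For `t > 0` the events `{ζ_t = 1}` and `{τ ≤ t}` agree up to a `P`-null set,
and consequently `{τ ≤ t}` belongs to the completed natural σ-algebra `𝓕^{ζ,c}_t` for all
`t ≥ 0`, i.e. `τ` is a stopping time for the completed natural filtration of `ζ`. -/
theorem randomLength_stopping_time
    {Ω : Type*} [MeasurableSpace Ω] (P : Measure Ω) [IsProbabilityMeasure P]
    (γ : ℝ → Ω → ℝ) (hγ : IsStdGammaProcess P γ)
    (τ : Ω → ℝ) (hτ : Measurable τ) (hτpos : ∀ ω, 0 < τ ω)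
    (hindep : Indep (MeasurableSpace.comap τ inferInstance)
      (⨆ t ∈ Set.Ici (0 : ℝ), MeasurableSpace.comap (γ t) inferInstance) P)
    (ζ : ℝ → Ω → ℝ) (hζ : ∀ t ω, ζ t ω = γ (min t (τ ω)) ω / γ (τ ω) ω)
    (Fc : ℝ → MeasurableSpace Ω)
    (hFc : ∀ t : ℝ, Fc t =
      (⨆ s ∈ Set.Icc (0 : ℝ) t, MeasurableSpace.comap (ζ s) inferInstance) ⊔
        MeasurableSpace.generateFrom {A : Set Ω | P A = 0}) :
    (∀ t : ℝ, 0 < t → P (symmDiff {ω | ζ t ω = 1} {ω | τ ω ≤ t}) = 0) ∧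
    (∀ t : ℝ, 0 ≤ t → MeasurableSet[Fc t] {ω | τ ω ≤ t}) :=
  randomLength_stopping_time_general P γ hγ τ hτpos ζ hζ Fc hFc
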